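/- Fix ρ ∈ [0,1] and for n ≥ 0 and k = 1,…,2^n set H_n(ρ,k) := H(ρ) ∩ [(k−1)2^{−n}, k·2^{−n}]. Then for all n and all k, H_n(ρ,k) = H_{n+1}(ρ,2k−1) ∪ H_{n+1}(ρ,2k), and H_n(ρ,k) is quasi self-similar: {2x − (k−1)2^{−n} : x ∈ H_{n+1}(ρ,2k−1)} ⊆ H_n(ρ,k) ⊆ {2x − k·2^{−n} : x ∈ H_{n+1}(ρ,2k)}. -/

import Mathlib

open Filter Set MeasureTheory

noncomputable section

/-- `g_0(z) = 2z - z²` (bit `false`), `g_1(z) = z²` (bit `true`). -/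
def gBit (c : Bool) (z : ℝ) : ℝ := if c then z ^ 2 else 2 * z - z ^ 2

/-- `pPre b n z = g_{b_n}(g_{b_{n-1}}(⋯ g_{b_1}(z) ⋯))`, where `b_i` is `b (i-1)`. -/
def pPre (b : ℕ → Bool) : ℕ → ℝ → ℝ
  | 0, z => z
  | n + 1, z => gBit (b n) (pPre b n z)

/-- `f(b) = Σ_{n ≥ 1} b_n 2^{-n}`. -/
def fBin (b : ℕ → Bool) : ℝ := ∑' n : ℕ, (if b n then (1 : ℝ) else 0) / 2 ^ (n + 1)

/-- The dyadic rationals in `[0,1]`. -/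
def dyadics : Set ℝ := Set.Icc 0 1 ∩ {x : ℝ | ∃ (p : ℤ) (n : ℕ), x = (p : ℝ) / 2 ^ n}

/-- The good channels of a BEC with erasure probability `ε`: `x ∈ [0,1]` such that some binary
expansion `b` of `x` satisfies `p_{b^n}(ε) → 0`. -/
def Gset (ε : ℝ) : Set ℝ :=
  {x : ℝ | ∃ b : ℕ → Bool, fBin b = x ∧ Tendsto (fun n => pPre b n ε) atTop (nhds 0)}

/-- The bad channels of a BEC with erasure probability `ε`: `x ∈ [0,1]` such that some binary
expansion `b` of `x` satisfies `p_{b^n}(ε) → 1`. -/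
def Bset (ε : ℝ) : Set ℝ :=
  {x : ℝ | ∃ b : ℕ → Bool, fBin b = x ∧ Tendsto (fun n => pPre b n ε) atTop (nhds 1)}

/-- Hamming weight `w(b^n)` of the length-`n` prefix of `b`. -/
def wPre (b : ℕ → Bool) (n : ℕ) : ℕ := ∑ i ∈ Finset.range n, (if b i then 1 else 0)

/-- `b` is `ρ`-heavy: `liminf_{n→∞} (w(b^n) - nρ) ≥ 0` (the liminf computed in `EReal`),
equivalently `liminf 2^{w(b^n)} / 2^{nρ} ≥ 1`. -/
def Heavy (ρ : ℝ) (b : ℕ → Bool) : Prop :=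
  0 ≤ atTop.liminf (fun n : ℕ => (((wPre b n : ℝ) - n * ρ : ℝ) : EReal))

/-- The set of `ρ`-heavy channels. -/
def Hset (ρ : ℝ) : Set ℝ := {x : ℝ | ∃ b : ℕ → Bool, fBin b = x ∧ Heavy ρ b}


/-- `H_n(ρ,k) = H(ρ) ∩ [(k-1)2^{-n}, k 2^{-n}]`. -/
def HnSet (ρ : ℝ) (n k : ℕ) : Set ℝ :=
  Hset ρ ∩ Set.Icc (((k : ℝ) - 1) / 2 ^ n) ((k : ℝ) / 2 ^ n)

/-!
If `j ≤ 2ᴺ·x ≤ j + 1`, every binary expansion of `x` starts with the `N` binary digits of `j`,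
unless `x` is one of the two endpoints. Off the endpoints the map `x ↦ 2x - (k-1)/2ⁿ` acts on
expansions by deleting the `0` at position `n + 1`, and the inverse of `y ↦ 2y - k/2ⁿ` by
inserting a `1` there. Neither operation lowers the excess `w(bᵐ) - mρ` (up to an index shift),
so heaviness is preserved. The endpoints are either fixed by the map, or dyadic points
`j/2ᵐ > 0`, which are `ρ`-heavy for `ρ < 1` through their expansion ending in `1`s, while
`H(1) = {1}` because after a single `0` the excess `w(bᵐ) - m` stays `≤ -1`.
-/

lemma summable_fBin_terms (b : ℕ → Bool) :
    Summable fun n : ℕ => (if b n then (1 : ℝ) else 0) / 2 ^ (n + 1) := by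
  refine Summable.of_nonneg_of_le (fun n => by positivity) (fun n => ?_)
    (summable_geometric_two.mul_left (1 / 2))
  rw [pow_succ, one_div_pow]
  split <;> field_simp <;> norm_num

lemma fBin_eq_head (b : ℕ → Bool) :
    fBin b = ((if b 0 then 1 else 0) + fBin fun i => b (i + 1)) / 2 := by
  unfold fBin
  rw [(summable_fBin_terms b).tsum_eq_zero_add, add_div, ← tsum_div_const]
  congr 1
  · simp
  · exact tsum_congr fun i => by rw [div_div, ← pow_succ]

lemma fBin_true : fBin (fun _ => true) = 1 := by
  have h := fBin_eq_head fun _ => true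
  simp only [if_true] at h
  linarith

lemma fBin_nonneg (b : ℕ → Bool) : 0 ≤ fBin b :=
  tsum_nonneg fun n => by positivity

lemma fBin_le_one (b : ℕ → Bool) : fBin b ≤ 1 := by
  rw [← fBin_true]
  refine (summable_fBin_terms b).tsum_le_tsum (fun n => ?_) (summable_fBin_terms _)
  gcongr
  split <;> norm_num

def prefixNat (b : ℕ → Bool) : ℕ → ℕ
  | 0 => 0
  | N + 1 => 2 * prefixNat b N + if b N then 1 else 0

lemma prefixNat_congr {b c : ℕ → Bool} {N : ℕ} (h : ∀ i < N, b i = c i) :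
    prefixNat b N = prefixNat c N := by
  induction N with
  | zero => rfl
  | succ N ih =>
    simp only [prefixNat, h N N.lt_succ_self, ih fun i hi => h i (by omega)]

lemma fBin_eq_prefixNat_add (b : ℕ → Bool) (N : ℕ) :
    fBin b = (prefixNat b N + fBin fun i => b (i + N)) / 2 ^ N := by
  induction N with
  | zero => simp [prefixNat]
  | succ N ih =>
    have h : (fBin fun i => b (i + N)) =
        ((if b N then 1 else 0) + fBin fun i => b (i + (N + 1))) / 2 := by
      rw [fBin_eq_head]
      simp only [zero_add, add_right_comm _ 1 N]
      rfl
    rw [ih, h, prefixNat, pow_succ]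
    push_cast
    field_simp
    ring

lemma prefixNat_eq_or_endpoint (b : ℕ → Bool) {N j : ℕ}
    (hlo : (j : ℝ) ≤ 2 ^ N * fBin b) (hhi : 2 ^ N * fBin b ≤ j + 1) :
    prefixNat b N = j ∨ 2 ^ N * fBin b = j ∨ 2 ^ N * fBin b = j + 1 := by
  have hsplit : 2 ^ N * fBin b = prefixNat b N + fBin fun i => b (i + N) := by
    rw [fBin_eq_prefixNat_add b N]
    field_simp
  have := fBin_nonneg fun i => b (i + N)
  have := fBin_le_one fun i => b (i + N)
  rcases lt_trichotomy (prefixNat b N) j with hlt | heq | hgt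
  · have : (prefixNat b N : ℝ) + 1 ≤ j := by exact_mod_cast hlt
    right; left; linarith
  · exact Or.inl heq
  · have : (j : ℝ) + 1 ≤ prefixNat b N := by exact_mod_cast hgt
    right; right; linarith

lemma wPre_succ (b : ℕ → Bool) (m : ℕ) : wPre b (m + 1) = wPre b m + if b m then 1 else 0 :=
  Finset.sum_range_succ _ m

lemma wPre_congr {b c : ℕ → Bool} {N : ℕ} (h : ∀ i < N, b i = c i) : wPre b N = wPre c N :=
  Finset.sum_congr rfl fun i hi => by rw [h i (Finset.mem_range.1 hi)]

lemma wPre_le (b : ℕ → Bool) (m : ℕ) : wPre b m ≤ m := by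
  induction m with
  | zero => rfl
  | succ m ih => rw [wPre_succ]; split <;> omega

lemma Heavy.of_eventually_le_shift {ρ : ℝ} {b c : ℕ → Bool} (hb : Heavy ρ b) (d d' : ℕ)
    (h : ∀ᶠ m in atTop, (wPre b (m + d) : ℝ) - (m + d : ℕ) * ρ ≤
      (wPre c (m + d') : ℝ) - (m + d' : ℕ) * ρ) :
    Heavy ρ c := by
  unfold Heavy at *
  rw [← liminf_nat_add _ d] at hb
  rw [← liminf_nat_add _ d']
  exact hb.trans (liminf_le_liminf (h.mono fun m hm => EReal.coe_le_coe_iff.2 hm))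

lemma heavy_of_eventually_true {ρ : ℝ} (hρ : ρ < 1) {c : ℕ → Bool} {N : ℕ}
    (hc : ∀ i ≥ N, c i = true) : Heavy ρ c := by
  have hw : ∀ m, m ≤ wPre c m + N := by
    intro m
    induction m with
    | zero => omega
    | succ m ih =>
      rw [wPre_succ]
      by_cases hm : N ≤ m
      · rw [hc m hm, if_pos rfl]; omega
      · omega
  have hgrowth : Tendsto (fun m : ℕ => (m : ℝ) * (1 - ρ)) atTop atTop :=
    tendsto_natCast_atTop_atTop.atTop_mul_const (by linarith)
  refine le_liminf_of_le (by isBoundedDefault) ?_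
  filter_upwards [hgrowth.eventually_ge_atTop (N : ℝ)] with m hm
  have : (m : ℝ) ≤ wPre c m + N := by exact_mod_cast hw m
  exact EReal.coe_nonneg.2 (by nlinarith)

lemma eq_true_of_heavy_one {b : ℕ → Bool} (hb : Heavy 1 b) (i : ℕ) : b i = true := by
  by_contra hbi
  rw [Bool.not_eq_true] at hbi
  have hdeficit : ∀ m > i, wPre b m + 1 ≤ m := by
    intro m hm
    induction m with
    | zero => omega
    | succ m ih =>
      rw [wPre_succ]
      rcases (Nat.lt_succ_iff.1 hm).eq_or_lt with rfl | hlt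
      · rw [hbi, if_neg Bool.false_ne_true]; have := wPre_le b i; omega
      · have := ih hlt; split <;> omega
  have hle : ∀ᶠ m in atTop, (((wPre b m : ℝ) - m * 1 : ℝ) : EReal) ≤ ((-1 : ℝ) : EReal) := by
    filter_upwards [eventually_gt_atTop i] with m hm
    have : (wPre b m : ℝ) + 1 ≤ m := by exact_mod_cast hdeficit m hm
    exact EReal.coe_le_coe_iff.2 (by linarith)
  have := EReal.coe_nonneg.1 (hb.trans (liminf_le_of_frequently_le' hle.frequently))
  norm_num at this

lemma eq_one_of_mem_Hset_one {x : ℝ} (hx : x ∈ Hset 1) : x = 1 := by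
  obtain ⟨b, rfl, hb⟩ := hx
  rw [show b = fun _ => true from funext (eq_true_of_heavy_one hb), fBin_true]

def deleteBit (b : ℕ → Bool) (n : ℕ) : ℕ → Bool := fun i => if i < n then b i else b (i + 1)

def insertTrue (b : ℕ → Bool) (n : ℕ) : ℕ → Bool :=
  fun i => if i < n then b i else if i = n then true else b (i - 1)

lemma deleteBit_of_lt (b : ℕ → Bool) {n i : ℕ} (h : i < n) : deleteBit b n i = b i := if_pos h

lemma deleteBit_of_ge (b : ℕ → Bool) {n i : ℕ} (h : n ≤ i) : deleteBit b n i = b (i + 1) :=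
  if_neg (by omega)

lemma insertTrue_of_lt (b : ℕ → Bool) {n i : ℕ} (h : i < n) : insertTrue b n i = b i := if_pos h

lemma insertTrue_self (b : ℕ → Bool) (n : ℕ) : insertTrue b n n = true := by
  simp [insertTrue]

lemma insertTrue_of_gt (b : ℕ → Bool) {n i : ℕ} (h : n < i) : insertTrue b n i = b (i - 1) := by
  rw [insertTrue, if_neg (by omega), if_neg (by omega)]

lemma fBin_deleteBit {b : ℕ → Bool} {n : ℕ} (hbn : b n = false) :
    fBin (deleteBit b n) = 2 * fBin b - prefixNat b n / 2 ^ n := by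
  have hprefix : prefixNat (deleteBit b n) n = prefixNat b n :=
    prefixNat_congr fun _ => deleteBit_of_lt b
  have hshift : (fun i => deleteBit b n (i + n)) = fun i => b (i + (n + 1)) :=
    funext fun i => by rw [deleteBit_of_ge b (by omega), add_assoc]
  rw [fBin_eq_prefixNat_add (deleteBit b n) n, hprefix, hshift,
    fBin_eq_prefixNat_add b (n + 1), prefixNat, hbn, pow_succ]
  push_cast
  field_simp
  ring

lemma fBin_insertTrue (b : ℕ → Bool) (n : ℕ) :
    fBin (insertTrue b n) = (fBin b + (prefixNat b n + 1) / 2 ^ n) / 2 := by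
  have hprefix : prefixNat (insertTrue b n) (n + 1) = 2 * prefixNat b n + 1 := by
    rw [prefixNat, prefixNat_congr fun _ => insertTrue_of_lt b, insertTrue_self, if_pos rfl]
  have hshift : (fun i => insertTrue b n (i + (n + 1))) = fun i => b (i + n) :=
    funext fun i => by rw [insertTrue_of_gt b (by omega)]; congr 1
  rw [fBin_eq_prefixNat_add (insertTrue b n) (n + 1), hprefix, hshift,
    fBin_eq_prefixNat_add b n, pow_succ]
  push_cast
  field_simp
  ring

lemma wPre_deleteBit {b : ℕ → Bool} {n : ℕ} (hbn : b n = false) :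
    ∀ m ≥ n, wPre (deleteBit b n) m = wPre b (m + 1) := by
  refine Nat.le_induction ?_ fun m hm ih => ?_
  · rw [wPre_congr fun _ => deleteBit_of_lt b, wPre_succ, hbn]
    rfl
  · rw [wPre_succ, ih, wPre_succ b (m + 1), deleteBit_of_ge b hm]

lemma wPre_insertTrue (b : ℕ → Bool) (n : ℕ) :
    ∀ m ≥ n, wPre (insertTrue b n) (m + 1) = wPre b m + 1 := by
  refine Nat.le_induction ?_ fun m hm ih => ?_
  · rw [wPre_succ, wPre_congr fun _ => insertTrue_of_lt b, insertTrue_self, if_pos rfl]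
  · rw [wPre_succ, ih, wPre_succ b m, insertTrue_of_gt b (by omega), Nat.add_sub_cancel]
    omega

lemma Heavy.deleteBit {ρ : ℝ} (hρ : 0 ≤ ρ) {b : ℕ → Bool} (hb : Heavy ρ b) {n : ℕ}
    (hbn : b n = false) : Heavy ρ (deleteBit b n) := by
  refine hb.of_eventually_le_shift 1 0 ?_
  filter_upwards [eventually_ge_atTop n] with m hm
  rw [add_zero, wPre_deleteBit hbn m hm]
  push_cast
  linarith

lemma Heavy.insertTrue {ρ : ℝ} (hρ : ρ ≤ 1) {b : ℕ → Bool} (hb : Heavy ρ b) (n : ℕ) :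
    Heavy ρ (insertTrue b n) := by
  refine hb.of_eventually_le_shift 0 1 ?_
  filter_upwards [eventually_ge_atTop n] with m hm
  rw [add_zero, wPre_insertTrue b n m hm]
  push_cast
  linarith

lemma exists_eventually_true_fBin_eq (m : ℕ) :
    ∀ i : ℕ, i < 2 ^ m →
      ∃ c : ℕ → Bool, (∃ N, ∀ l ≥ N, c l = true) ∧ fBin c = ((i : ℝ) + 1) / 2 ^ m := by
  induction m with
  | zero =>
    intro i hi
    obtain rfl : i = 0 := by omega
    exact ⟨fun _ => true, ⟨0, fun _ _ => rfl⟩, by simp [fBin_true]⟩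
  | succ m ih =>
    intro i hi
    have hcons : ∀ (β : Bool) (c : ℕ → Bool), fBin (fun l => if l = 0 then β else c (l - 1)) =
        ((if β then 1 else 0) + fBin c) / 2 := fun β c => by
      rw [fBin_eq_head]; simp
    have htrue : ∀ (β : Bool) (c : ℕ → Bool) (N : ℕ), (∀ l ≥ N, c l = true) →
        ∀ l ≥ N + 1, (if l = 0 then β else c (l - 1)) = true := fun β c N hc l hl => by
      rw [if_neg (by omega), hc _ (by omega)]
    rcases lt_or_ge i (2 ^ m) with hlt | hge
    · obtain ⟨c, ⟨N, hN⟩, hc⟩ := ih i hlt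
      refine ⟨_, ⟨N + 1, htrue false c N hN⟩, ?_⟩
      rw [hcons, hc, pow_succ]
      simp only [Bool.false_eq_true, if_false]
      field_simp
      ring
    · obtain ⟨i', rfl⟩ := Nat.exists_eq_add_of_le hge
      obtain ⟨c, ⟨N, hN⟩, hc⟩ := ih i' (by rw [pow_succ] at hi; omega)
      refine ⟨_, ⟨N + 1, htrue true c N hN⟩, ?_⟩
      rw [hcons, hc, pow_succ]
      push_cast
      simp only [if_true]
      field_simp
      ring

lemma add_one_div_two_pow_mem_Hset {ρ : ℝ} (hρ : ρ < 1) {m i : ℕ} (hi : i < 2 ^ m) :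
    ((i : ℝ) + 1) / 2 ^ m ∈ Hset ρ := by
  obtain ⟨c, ⟨N, hN⟩, hc⟩ := exists_eventually_true_fBin_eq m i hi
  exact ⟨c, hc, heavy_of_eventually_true hρ hN⟩

lemma mem_HnSet_iff {ρ x : ℝ} {n k : ℕ} :
    x ∈ HnSet ρ n k ↔ x ∈ Hset ρ ∧ (k : ℝ) - 1 ≤ 2 ^ n * x ∧ 2 ^ n * x ≤ k := by
  have hpos : (0 : ℝ) < 2 ^ n := by positivity
  simp only [HnSet, mem_inter_iff, mem_Icc, div_le_iff₀ hpos, le_div_iff₀ hpos, mul_comm x]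

lemma HnSet_eq_union (ρ : ℝ) (n j : ℕ) :
    HnSet ρ n (j + 1) = HnSet ρ (n + 1) (2 * j + 1) ∪ HnSet ρ (n + 1) (2 * j + 2) := by
  ext x
  simp only [mem_union, mem_HnSet_iff, pow_succ', mul_assoc]
  push_cast
  constructor
  · rintro ⟨hx, hlo, hhi⟩
    rcases le_total (2 * (2 ^ n * x)) (2 * j + 1) with hmid | hmid
    · exact Or.inl ⟨hx, by linarith, hmid⟩
    · exact Or.inr ⟨hx, by linarith, by linarith⟩
  · rintro (⟨hx, hlo, hhi⟩ | ⟨hx, hlo, hhi⟩) <;> exact ⟨hx, by linarith, by linarith⟩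

lemma image_HnSet_left_subset {ρ : ℝ} (hρ : ρ ∈ Icc (0 : ℝ) 1) {n j : ℕ} (hj : j < 2 ^ n) :
    (fun x => 2 * x - (j : ℝ) / 2 ^ n) '' HnSet ρ (n + 1) (2 * j + 1) ⊆ HnSet ρ n (j + 1) := by
  rintro _ ⟨x, hx, rfl⟩
  have hpos : (0 : ℝ) < 2 ^ n := by positivity
  have hscale : 2 ^ n * (2 * x - j / 2 ^ n) = 2 * (2 ^ n * x) - j := by field_simp
  obtain ⟨⟨b, rfl, hb⟩, hlo, hhi⟩ := mem_HnSet_iff.1 hx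
  dsimp only
  simp only [pow_succ', mul_assoc] at hlo hhi
  push_cast at hlo hhi
  refine mem_HnSet_iff.2 ⟨?_, by push_cast; linarith, by push_cast; linarith⟩
  rcases prefixNat_eq_or_endpoint b (N := n + 1) (j := 2 * j)
      (by push_cast; rw [pow_succ', mul_assoc]; linarith)
      (by push_cast; rw [pow_succ', mul_assoc]; linarith) with hpre | hleft | hright
  · cases hbn : b n
    · have hpre : prefixNat b n = j := by
        simp only [prefixNat, hbn, Bool.false_eq_true, if_false] at hpre
        omega
      exact ⟨deleteBit b n, by rw [fBin_deleteBit hbn, hpre], hb.deleteBit hρ.1 hbn⟩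
    · simp only [prefixNat, hbn, if_true] at hpre
      omega
  · rw [pow_succ', mul_assoc] at hleft
    push_cast at hleft
    have : 2 * fBin b - j / 2 ^ n = fBin b := by field_simp; linarith
    rw [this]
    exact ⟨b, rfl, hb⟩
  · rw [pow_succ', mul_assoc] at hright
    push_cast at hright
    rcases hρ.2.lt_or_eq with hρ1 | rfl
    · have : 2 * fBin b - j / 2 ^ n = (j + 1) / 2 ^ n := by field_simp; linarith
      rw [this]
      exact add_one_div_two_pow_mem_Hset hρ1 hj
    · have hone := eq_one_of_mem_Hset_one ⟨b, rfl, hb⟩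
      have : (j : ℝ) + 1 ≤ 2 ^ n := by exact_mod_cast hj
      rw [hone] at hright
      linarith

lemma HnSet_subset_image_right {ρ : ℝ} (hρ : ρ ≤ 1) {n j : ℕ} (hj : j < 2 ^ n) :
    HnSet ρ n (j + 1) ⊆
      (fun x => 2 * x - ((j : ℝ) + 1) / 2 ^ n) '' HnSet ρ (n + 1) (2 * j + 2) := by
  intro y hy
  have hpos : (0 : ℝ) < 2 ^ n := by positivity
  obtain ⟨⟨b, rfl, hb⟩, hlo, hhi⟩ := mem_HnSet_iff.1 hy
  push_cast at hlo hhi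
  rw [add_sub_cancel_right] at hlo
  have hmem : (fBin b + (j + 1) / 2 ^ n) / 2 ∈ Hset ρ := by
    rcases prefixNat_eq_or_endpoint b hlo hhi with hpre | hleft | hright
    · exact ⟨insertTrue b n, by rw [fBin_insertTrue, hpre], hb.insertTrue hρ n⟩
    · rcases hρ.lt_or_eq with hρ1 | rfl
      · have : (fBin b + (j + 1) / 2 ^ n) / 2 = (((2 * j : ℕ) : ℝ) + 1) / 2 ^ (n + 1) := by
          rw [pow_succ']; push_cast; field_simp; linarith
        rw [this]
        exact add_one_div_two_pow_mem_Hset hρ1 (by rw [pow_succ']; omega)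
      · have hone := eq_one_of_mem_Hset_one ⟨b, rfl, hb⟩
        have : (j : ℝ) + 1 ≤ 2 ^ n := by exact_mod_cast hj
        rw [hone] at hleft
        linarith
    · have : (fBin b + (j + 1) / 2 ^ n) / 2 = fBin b := by field_simp; linarith
      rw [this]
      exact ⟨b, rfl, hb⟩
  refine ⟨_, mem_HnSet_iff.2 ⟨hmem, ?_, ?_⟩, by ring⟩ <;>
    · rw [pow_succ']; push_cast; field_simp; linarith

/-- Quasi self-similarity of the set of heavy channels:
`H_n(ρ,k) = H_{n+1}(ρ,2k-1) ∪ H_{n+1}(ρ,2k)` and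
`2·H_{n+1}(ρ,2k-1) - (k-1)2^{-n} ⊆ H_n(ρ,k) ⊆ 2·H_{n+1}(ρ,2k) - k·2^{-n}`. -/
theorem heavy_quasi_self_similar (ρ : ℝ) (hρ : ρ ∈ Set.Icc (0 : ℝ) 1) (n k : ℕ)
    (hk1 : 1 ≤ k) (hk2 : k ≤ 2 ^ n) :
    HnSet ρ n k = HnSet ρ (n + 1) (2 * k - 1) ∪ HnSet ρ (n + 1) (2 * k) ∧
    (fun x => 2 * x - ((k : ℝ) - 1) / 2 ^ n) '' HnSet ρ (n + 1) (2 * k - 1) ⊆ HnSet ρ n k ∧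
    HnSet ρ n k ⊆ (fun x => 2 * x - (k : ℝ) / 2 ^ n) '' HnSet ρ (n + 1) (2 * k) := by
  obtain ⟨j, rfl⟩ := Nat.exists_eq_add_of_le' hk1
  have hj : j < 2 ^ n := by omega
  rw [show 2 * (j + 1) - 1 = 2 * j + 1 by omega, show 2 * (j + 1) = 2 * j + 2 by ring]
  push_cast
  rw [add_sub_cancel_right]
  exact ⟨HnSet_eq_union ρ n j, image_HnSet_left_subset hρ hj, HnSet_subset_image_right hρ.2 hj⟩
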